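/- arXiv:2404.13839 — 6 statements merged into one kernel-verified Lean document; each statement's English description precedes it below -/
import Mathlib

section
/- Let n be an odd positive integer, let E be a finite set with |E| = n, and let Dⁿ = (E, 𝓕) where 𝓕 consists of all subsets of E of even cardinality. Then for every A ⊆ E one has w(Dⁿ ⋆ A) = n − 1; consequently the twist polynomial ∑_{A ⊆ E} z^{w(Dⁿ ⋆ A)} is the single-term polynomial 2ⁿ · z^{n−1}. -/
open Finset
open scoped symmDiff

/-- A delta-matroid on ground set `E`: a nonempty collection `𝓕` of subsets of `E`
(the feasible sets) satisfying the Symmetric Exchange Axiom. -/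
def IsDeltaMatroid {α : Type*} [DecidableEq α] (E : Finset α) (𝓕 : Set (Finset α)) : Prop :=
  𝓕.Nonempty ∧ (∀ F ∈ 𝓕, F ⊆ E) ∧
    ∀ F₁ ∈ 𝓕, ∀ F₂ ∈ 𝓕, ∀ x ∈ F₁ ∆ F₂,
      ∃ y ∈ F₁ ∆ F₂, F₁ ∆ ({x, y} : Finset α) ∈ 𝓕

/-- The twist `D ⋆ A` of a set system: feasible sets are `A ∆ F` for `F` feasible. -/
def twist {α : Type*} [DecidableEq α] (𝓕 : Set (Finset α)) (A : Finset α) : Set (Finset α) :=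
  (fun F => A ∆ F) '' 𝓕

/-- Width: maximum feasible cardinality minus minimum feasible cardinality. -/
noncomputable def width {α : Type*} (𝓕 : Set (Finset α)) : ℕ :=
  sSup (Finset.card '' 𝓕) - sInf (Finset.card '' 𝓕)

/-- The deletion `D ∖ e`: feasible sets of `D` avoiding `e` (ground set `E \ {e}`). -/
def deleteSys {α : Type*} (𝓕 : Set (Finset α)) (e : α) : Set (Finset α) :=
  {F ∈ 𝓕 | e ∉ F}

/-- The contraction `D / e`: subsets `F` of `E \ {e}` with `F ∪ {e}` feasible in `D`. -/
def contractSys {α : Type*} [DecidableEq α] (E : Finset α) (𝓕 : Set (Finset α)) (e : α) :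
    Set (Finset α) :=
  {F | F ⊆ E.erase e ∧ F ∪ {e} ∈ 𝓕}

/-- A set system is even if any two feasible sets have symmetric difference of even size. -/
def IsEvenSys {α : Type*} [DecidableEq α] (𝓕 : Set (Finset α)) : Prop :=
  ∀ F₁ ∈ 𝓕, ∀ F₂ ∈ 𝓕, Even (F₁ ∆ F₂).card

/-- The set system `(E, 𝓕)` contains an S-pattern at `F` with witnesses `x₁ x₂ y₁ y₂`. -/
def SPatternAt {α : Type*} [DecidableEq α] (E : Finset α) (𝓕 : Set (Finset α))
    (F : Finset α) (x₁ x₂ y₁ y₂ : α) : Prop :=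
  F ∈ 𝓕 ∧ x₁ ∈ F ∧ x₂ ∈ F ∧ x₁ ≠ x₂ ∧
    y₁ ∈ E \ F ∧ y₂ ∈ E \ F ∧ y₁ ≠ y₂ ∧
    F ∆ ({x₁, y₁} : Finset α) ∈ 𝓕 ∧ F ∆ ({x₂, y₂} : Finset α) ∈ 𝓕 ∧
    F ∆ ({x₁, y₂} : Finset α) ∈ 𝓕 ∧ F ∆ ({x₂, y₁} : Finset α) ∈ 𝓕 ∧
    F ∆ ({x₁, y₁} : Finset α) ∆ ({x₂, y₂} : Finset α) ∈ 𝓕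

/-!
Twisting by `A` is a bijection on subsets of `E` that shifts parity of cardinality by `|A|`,
so the feasible sizes of `Dⁿ ⋆ A` are exactly the `k ≤ n` with `k ≡ |A| (mod 2)`. For odd `n`
this is `{0, 2, …, n - 1}` or `{1, 3, …, n}`, and either way the width is `n - 1`.
-/

namespace Finset

variable {α : Type*} [DecidableEq α]

theorem card_symmDiff_add_two_mul_card_inter (s t : Finset α) :
    (s ∆ t).card + 2 * (s ∩ t).card = s.card + t.card := by
  rw [symmDiff_eq_sup_sdiff_inf, sup_eq_union, inf_eq_inter,
    card_sdiff_of_subset inter_subset_union, ← card_union_add_card_inter]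
  have := card_le_card (inter_subset_union (s := s) (t := t))
  omega

theorem even_card_symmDiff_iff (s t : Finset α) :
    Even (s ∆ t).card ↔ (Even s.card ↔ Even t.card) := by
  rw [← Nat.even_add, ← card_symmDiff_add_two_mul_card_inter, Nat.even_add]
  simp

end Finset

theorem card_image_twist_evenSubsets {α : Type*} [DecidableEq α] {E A : Finset α} (hA : A ⊆ E) :
    Finset.card '' twist {F : Finset α | F ⊆ E ∧ Even F.card} A
      = {k | k ≤ E.card ∧ (Even k ↔ Even A.card)} := by
  ext k
  constructor
  · rintro ⟨-, ⟨F, ⟨hFE, hF⟩, rfl⟩, rfl⟩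
    exact ⟨card_le_card (symmDiff_subset_union.trans (union_subset hA hFE)),
      by simp [even_card_symmDiff_iff, hF]⟩
  · rintro ⟨hk, hpar⟩
    obtain ⟨G, hGE, rfl⟩ := exists_subset_card_eq hk
    refine ⟨G, ⟨A ∆ G, ⟨symmDiff_subset_union.trans (union_subset hA hGE), ?_⟩, ?_⟩, rfl⟩
    · rw [even_card_symmDiff_iff]
      exact hpar.symm
    · exact symmDiff_symmDiff_cancel_left A G

theorem width_eq_pred_of_card_image_eq_parityClass {α : Type*} {𝓕 : Set (Finset α)} {n a : ℕ}
    (hn : Odd n) (h𝓕 : Finset.card '' 𝓕 = {k | k ≤ n ∧ (Even k ↔ Even a)}) :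
    width 𝓕 = n - 1 := by
  rw [width, h𝓕]
  simp only [Nat.odd_iff, Nat.even_iff] at hn ⊢
  rcases Nat.mod_two_eq_zero_or_one a with ha | ha
  · rw [IsGreatest.csSup_eq (a := n - 1), IsLeast.csInf_eq (a := 0), Nat.sub_zero]
    all_goals exact ⟨⟨by omega, by omega⟩, fun k ⟨_, _⟩ => by omega⟩
  · rw [IsGreatest.csSup_eq (a := n), IsLeast.csInf_eq (a := 1)]
    all_goals exact ⟨⟨by omega, by omega⟩, fun k ⟨_, _⟩ => by omega⟩

theorem twist_polynomial_even_sets_general {α : Type*} [DecidableEq α] (n : ℕ) (hn : Odd n)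
    (E : Finset α) (hE : E.card = n) :
    (∀ A ⊆ E, width (twist {F : Finset α | F ⊆ E ∧ Even F.card} A) = n - 1) ∧
    ∑ A ∈ E.powerset,
        (Polynomial.X : Polynomial ℤ) ^ width (twist {F : Finset α | F ⊆ E ∧ Even F.card} A)
      = Polynomial.C (2 ^ n : ℤ) * Polynomial.X ^ (n - 1) := by
  have hw : ∀ A ⊆ E, width (twist {F : Finset α | F ⊆ E ∧ Even F.card} A) = n - 1 :=
    fun _ hA =>
      width_eq_pred_of_card_image_eq_parityClass hn (hE ▸ card_image_twist_evenSubsets hA)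
  refine ⟨hw, ?_⟩
  rw [Finset.sum_congr rfl fun A hA => by rw [hw A (Finset.mem_powerset.mp hA)],
    Finset.sum_const, Finset.card_powerset, hE, nsmul_eq_mul]
  simp

/-- For `Dⁿ` the delta-matroid of even-cardinality subsets of an `n`-element
set (`n` odd, positive), every twist has width `n - 1`, and hence the twist polynomial
`∑_{A ⊆ E} z^{w(Dⁿ ⋆ A)}` equals `2ⁿ · z^(n-1)`. -/
theorem twist_polynomial_even_sets {α : Type*} [DecidableEq α] (n : ℕ) (hn : Odd n)
    (hpos : 0 < n) (E : Finset α) (hE : E.card = n) :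
    (∀ A ⊆ E, width (twist {F : Finset α | F ⊆ E ∧ Even F.card} A) = n - 1) ∧
    ∑ A ∈ E.powerset,
        (Polynomial.X : Polynomial ℤ) ^ width (twist {F : Finset α | F ⊆ E ∧ Even F.card} A)
      = Polynomial.C (2 ^ n : ℤ) * Polynomial.X ^ (n - 1) :=
  twist_polynomial_even_sets_general n hn E hE
end

section
/- Let D = (E, 𝓕) be an even delta-matroid with ∅ ∈ 𝓕 such that w(D ⋆ A) = w(D) for every A ⊆ E. Then there is no element x ∈ E that belongs to every feasible set of maximum cardinality of D. -/
open Finset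
open scoped symmDiff

/-!
Since `∅` is feasible, every feasible set has even size, and the width of `D` is the
maximum cardinality `k`. If `x` lay in every maximum feasible set, then in `D ⋆ {x}` every
feasible set `{x} ∆ F` would be odd of size `|F| ± 1`; a feasible `F` missing `x` is not
maximum, hence has size at most `k - 2`. So all sizes in `D ⋆ {x}` lie in `[1, k - 1]` and its
width is at most `k - 2 < k`.
-/

namespace Finset

variable {α : Type*} [DecidableEq α]

theorem singleton_symmDiff_of_mem {x : α} {F : Finset α} (hx : x ∈ F) :
    ({x} : Finset α) ∆ F = F.erase x := by
  ext a
  by_cases ha : a = x <;> simp [mem_symmDiff, ha, hx]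

theorem singleton_symmDiff_of_notMem {x : α} {F : Finset α} (hx : x ∉ F) :
    ({x} : Finset α) ∆ F = insert x F := by
  ext a
  by_cases ha : a = x <;> simp [mem_symmDiff, ha, hx]

end Finset

section SetSystem

variable {α : Type*} [DecidableEq α] {𝓕 : Set (Finset α)}

theorem IsEvenSys.even_card (hEv : IsEvenSys 𝓕) (hempty : ∅ ∈ 𝓕) {F : Finset α}
    (hF : F ∈ 𝓕) : Even F.card := by
  simpa [← Finset.bot_eq_empty] using hEv F hF ∅ hempty

theorem IsDeltaMatroid.exists_max_card {E : Finset α} (hD : IsDeltaMatroid E 𝓕) :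
    ∃ F ∈ 𝓕, ∀ G ∈ 𝓕, G.card ≤ F.card :=
  Set.exists_max_image 𝓕 Finset.card
    (E.powerset.finite_toSet.subset fun F hF => by simpa using hD.2.1 F hF)
    hD.1

end SetSystem

section Width

variable {α : Type*} {𝓕 : Set (Finset α)}

theorem width_eq_card_of_empty_mem (hempty : ∅ ∈ 𝓕) {F : Finset α} (hF : F ∈ 𝓕)
    (hmax : ∀ G ∈ 𝓕, G.card ≤ F.card) : width 𝓕 = F.card := by
  have hsup : sSup (Finset.card '' 𝓕) = F.card :=
    IsGreatest.csSup_eq ⟨⟨F, hF, rfl⟩, by rintro _ ⟨G, hG, rfl⟩; exact hmax G hG⟩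
  have hinf : sInf (Finset.card '' 𝓕) = 0 :=
    Nat.sInf_eq_zero.2 (Or.inl ⟨∅, hempty, Finset.card_empty⟩)
  rw [width, hsup, hinf, Nat.sub_zero]

theorem width_le_of_forall_card_mem_Icc (hne : 𝓕.Nonempty) {a b : ℕ}
    (h : ∀ F ∈ 𝓕, F.card ∈ Set.Icc a b) : width 𝓕 ≤ b - a := by
  have hcard : ∀ n ∈ Finset.card '' 𝓕, n ∈ Set.Icc a b := by
    rintro _ ⟨F, hF, rfl⟩; exact h F hF
  have hne' : (Finset.card '' 𝓕).Nonempty := hne.image _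
  have hsup : sSup (Finset.card '' 𝓕) ≤ b := csSup_le hne' fun n hn => (hcard n hn).2
  have hinf : a ≤ sInf (Finset.card '' 𝓕) := (hcard _ (Nat.sInf_mem hne')).1
  unfold width
  omega

end Width

theorem card_twist_singleton_mem_Icc {α : Type*} [DecidableEq α] {𝓕 : Set (Finset α)}
    (heven : ∀ F ∈ 𝓕, Even F.card) {x : α}
    (hx : ∀ F ∈ 𝓕, (∀ G ∈ 𝓕, G.card ≤ F.card) → x ∈ F) {M : Finset α} (hM : M ∈ 𝓕)
    (hmax : ∀ G ∈ 𝓕, G.card ≤ M.card) :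
    ∀ G ∈ twist 𝓕 {x}, G.card ∈ Set.Icc 1 (M.card - 1) := by
  rintro - ⟨F, hF, rfl⟩
  dsimp only
  obtain ⟨m, hm⟩ := heven F hF
  obtain ⟨k, hk⟩ := heven M hM
  have hFM := hmax F hF
  by_cases hxF : x ∈ F
  · have hpos := Finset.card_pos.2 ⟨x, hxF⟩
    rw [Finset.singleton_symmDiff_of_mem hxF, Finset.card_erase_of_mem hxF]
    constructor <;> omega
  · have hlt : F.card < M.card :=
      lt_of_le_of_ne hFM fun h => hxF (hx F hF fun G hG => h ▸ hmax G hG)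
    rw [Finset.singleton_symmDiff_of_notMem hxF, Finset.card_insert_of_notMem hxF]
    constructor <;> omega

/-- if `D` is an even delta-matroid with `∅` feasible and all twists have
the same width as `D`, then no element of `E` lies in every maximum-cardinality feasible
set. -/
theorem no_element_in_all_max {α : Type*} [DecidableEq α] (E : Finset α)
    (𝓕 : Set (Finset α)) (hD : IsDeltaMatroid E 𝓕) (hEv : IsEvenSys 𝓕)
    (hempty : ∅ ∈ 𝓕) (hw : ∀ A ⊆ E, width (twist 𝓕 A) = width 𝓕) :
    ¬ ∃ x ∈ E, ∀ F ∈ 𝓕, (∀ G ∈ 𝓕, G.card ≤ F.card) → x ∈ F := by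
  rintro ⟨x, hxE, hx⟩
  obtain ⟨M, hM, hmax⟩ := hD.exists_max_card
  have hMpos : 0 < M.card := Finset.card_pos.2 ⟨x, hx M hM hmax⟩
  have hwidth : width 𝓕 = M.card := width_eq_card_of_empty_mem hempty hM hmax
  have hwidth_twist : width (twist 𝓕 {x}) ≤ M.card - 1 - 1 :=
    width_le_of_forall_card_mem_Icc (hD.1.image _)
      (card_twist_singleton_mem_Icc (fun F hF => hEv.even_card hempty hF) hx hM hmax)
  have := hw {x} (Finset.singleton_subset_iff.2 hxE)
  omega
end

section
/- Let D = (E, 𝓕) be a delta-matroid with ∅ ∈ 𝓕 such that w(D ⋆ A) = w(D) for every A ⊆ E. If E ∈ 𝓕, then 𝓕 is the full power set of E. -/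
open Finset
open scoped symmDiff

/-
The width of `𝓕` is `|E|`, since `∅` and `E` are feasible. A twist `𝓕 ⋆ F` by `F ⊆ E` is again a
system of subsets of `E`, so its width can only be `|E|` if it contains a set of size `0`; that set
is `F ∆ G = ∅` for some feasible `G`, i.e. `F = G` is feasible.
-/

section Width

variable {α : Type*} {E : Finset α} {𝓖 : Set (Finset α)}

lemma card_le_of_mem_card_image (hsub : ∀ G ∈ 𝓖, G ⊆ E) :
    ∀ n ∈ Finset.card '' 𝓖, n ≤ E.card := by
  rintro n ⟨G, hG, rfl⟩
  exact card_le_card (hsub G hG)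

lemma width_eq_card_of_empty_mem_of_mem (hsub : ∀ G ∈ 𝓖, G ⊆ E) (hempty : ∅ ∈ 𝓖)
    (hE : E ∈ 𝓖) : width 𝓖 = E.card := by
  have hsSup : sSup (Finset.card '' 𝓖) = E.card :=
    le_antisymm (csSup_le ⟨E.card, E, hE, rfl⟩ (card_le_of_mem_card_image hsub))
      (le_csSup ⟨E.card, card_le_of_mem_card_image hsub⟩ ⟨E, hE, rfl⟩)
  have hsInf : sInf (Finset.card '' 𝓖) = 0 := Nat.sInf_eq_zero.mpr (Or.inl ⟨∅, hempty, rfl⟩)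
  rw [width, hsSup, hsInf, Nat.sub_zero]

lemma empty_mem_of_width_eq_card (hsub : ∀ G ∈ 𝓖, G ⊆ E) (hne : 𝓖.Nonempty)
    (hwidth : width 𝓖 = E.card) : ∅ ∈ 𝓖 := by
  have hcard_ne : (Finset.card '' 𝓖).Nonempty := hne.image _
  have hsSup_le : sSup (Finset.card '' 𝓖) ≤ E.card :=
    csSup_le hcard_ne (card_le_of_mem_card_image hsub)
  have hsInf_le : sInf (Finset.card '' 𝓖) ≤ sSup (Finset.card '' 𝓖) :=
    csInf_le_csSup hcard_ne (OrderBot.bddBelow _) ⟨E.card, card_le_of_mem_card_image hsub⟩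
  have hsInf : sInf (Finset.card '' 𝓖) = 0 := by
    rw [width] at hwidth
    omega
  obtain ⟨G, hG, hcard⟩ := hsInf ▸ Nat.sInf_mem hcard_ne
  rwa [card_eq_zero.mp hcard] at hG

end Width

section Twist

variable {α : Type*} [DecidableEq α] {E A : Finset α} {𝓕 : Set (Finset α)}

lemma subset_of_mem_twist (hA : A ⊆ E) (hsub : ∀ F ∈ 𝓕, F ⊆ E) :
    ∀ G ∈ twist 𝓕 A, G ⊆ E := by
  rintro _ ⟨F, hF, rfl⟩
  exact symmDiff_le_sup.trans (union_subset hA (hsub F hF))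

lemma empty_mem_twist_iff : ∅ ∈ twist 𝓕 A ↔ A ∈ 𝓕 := by
  simp [twist, ← bot_eq_empty, symmDiff_eq_bot]

end Twist

/-- if `D` is a delta-matroid with `∅` feasible, all twists have the same
width as `D`, and `E` itself is feasible, then every subset of `E` is feasible. -/
theorem feasible_powerset {α : Type*} [DecidableEq α] (E : Finset α)
    (𝓕 : Set (Finset α)) (hD : IsDeltaMatroid E 𝓕)
    (hempty : ∅ ∈ 𝓕) (hw : ∀ A ⊆ E, width (twist 𝓕 A) = width 𝓕)
    (hE : E ∈ 𝓕) :
    𝓕 = {F : Finset α | F ⊆ E} := by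
  obtain ⟨hne, hsub, -⟩ := hD
  ext F
  refine ⟨hsub F, fun hF => ?_⟩
  have hwidth : width 𝓕 = E.card := width_eq_card_of_empty_mem_of_mem hsub hempty hE
  rw [← empty_mem_twist_iff (A := F)]
  exact empty_mem_of_width_eq_card (subset_of_mem_twist hF hsub) (hne.image _)
    (hw F hF ▸ hwidth)
end

section
/- Let M be a matroid on a finite ground set E with base collection 𝓑. Let F ∈ 𝓑, let x, x' ∈ F be distinct, and let y, y' ∈ E ∖ F be distinct. If F Δ {x, y} ∈ 𝓑 and F Δ {x', y'} ∈ 𝓑, then either F Δ {x, y} Δ {x', y'} ∈ 𝓑, or both F Δ {x, y'} ∈ 𝓑 and F Δ {x', y} ∈ 𝓑. -/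
open scoped symmDiff

/-!
Put `B₁ = F ∆ {x, y}` and `B₂ = F ∆ {x', y'}`. Exchanging `x' ∈ B₁ \ B₂` into `B₂ \ B₁ = {x, y'}`
makes `B₁ ∆ {x', y'}` or `B₁ ∆ {x', x} = F ∆ {x', y}` a base; symmetrically, exchanging
`x ∈ B₂ \ B₁` makes `B₂ ∆ {x, y} = B₁ ∆ {x', y'}` or `F ∆ {x, y'}` a base.
-/

namespace Set

variable {α : Type*} {F : Set α} {x x' y : α}

theorem symmDiff_pair_eq_insert_diff (hx : x ∈ F) (hy : y ∉ F) :
    F ∆ {x, y} = insert y (F \ {x}) := by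
  ext a
  simp only [mem_symmDiff, mem_insert_iff, mem_singleton_iff, mem_sdiff]
  grind

theorem pair_symmDiff_pair_of_ne (hxx : x ≠ x') (hxy : x ≠ y) (hx'y : x' ≠ y) :
    ({x, y} : Set α) ∆ {x', x} = {x', y} := by
  ext a
  simp only [mem_symmDiff, mem_insert_iff, mem_singleton_iff]
  grind

end Set

namespace Matroid

variable {α : Type*} {M : Matroid α} {B₁ B₂ F : Set α} {e x x' y y' : α}

theorem IsBase.exists_isBase_symmDiff_pair (hB₁ : M.IsBase B₁) (hB₂ : M.IsBase B₂)
    (he : e ∈ B₁ \ B₂) : ∃ f ∈ B₂ \ B₁, M.IsBase (B₁ ∆ {e, f}) := by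
  obtain ⟨f, hf, hbase⟩ := hB₁.exchange hB₂ he
  exact ⟨f, hf, by rwa [Set.symmDiff_pair_eq_insert_diff he.1 hf.2]⟩

theorem isBase_symmDiff_symmDiff_or_isBase_symmDiff (hx : x ∈ F) (hx' : x' ∈ F) (hxx : x ≠ x')
    (hy : y ∉ F) (hy' : y' ∉ F) (h₁ : M.IsBase (F ∆ {x, y})) (h₂ : M.IsBase (F ∆ {x', y'})) :
    M.IsBase (F ∆ {x, y} ∆ {x', y'}) ∨ M.IsBase (F ∆ {x', y}) := by
  have hx'y : x' ≠ y := ne_of_mem_of_not_mem hx' hy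
  have hx'_mem : x' ∈ F ∆ {x, y} \ F ∆ {x', y'} := by
    simp [Set.symmDiff_pair_eq_insert_diff, hx, hx', hy, hy', hxx.symm, hx'y,
      ne_of_mem_of_not_mem hx' hy']
  obtain ⟨f, hf, hbase⟩ := h₁.exists_isBase_symmDiff_pair h₂ hx'_mem
  have hf_cases : f = x ∨ f = y' := by
    simp only [Set.symmDiff_pair_eq_insert_diff, hx, hx', hy, hy', not_false_eq_true,
      Set.mem_sdiff, Set.mem_insert_iff, Set.mem_singleton_iff] at hf
    tauto
  rcases hf_cases with rfl | rfl
  · right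
    rwa [symmDiff_assoc, Set.pair_symmDiff_pair_of_ne hxx (ne_of_mem_of_not_mem hx hy) hx'y]
      at hbase
  · exact .inl hbase

end Matroid

theorem base_exchange_pattern_general {α : Type*} (M : Matroid α)
    (F : Set α) (x x' y y' : α)
    (hx : x ∈ F) (hx' : x' ∈ F) (hxx : x ≠ x')
    (hy : y ∈ M.E \ F) (hy' : y' ∈ M.E \ F)
    (h1 : M.IsBase (F ∆ ({x, y} : Set α))) (h2 : M.IsBase (F ∆ ({x', y'} : Set α))) :
    M.IsBase (F ∆ ({x, y} : Set α) ∆ ({x', y'} : Set α)) ∨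
      (M.IsBase (F ∆ ({x, y'} : Set α)) ∧ M.IsBase (F ∆ ({x', y} : Set α))) := by
  have hxy := Matroid.isBase_symmDiff_symmDiff_or_isBase_symmDiff hx hx' hxx hy.2 hy'.2 h1 h2
  have hyx := Matroid.isBase_symmDiff_symmDiff_or_isBase_symmDiff hx' hx hxx.symm hy'.2 hy.2 h2 h1
  rw [symmDiff_right_comm] at hyx
  tauto

/-- in a matroid on a finite ground set, if `F` is a base, `x, x' ∈ F`
are distinct, `y, y' ∈ E \ F` are distinct, and both `F ∆ {x, y}` and `F ∆ {x', y'}`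
are bases, then either `F ∆ {x, y} ∆ {x', y'}` is a base, or both `F ∆ {x, y'}` and
`F ∆ {x', y}` are bases. -/
theorem base_exchange_pattern {α : Type*} (M : Matroid α) (hfin : M.E.Finite)
    (F : Set α) (hF : M.IsBase F) (x x' y y' : α)
    (hx : x ∈ F) (hx' : x' ∈ F) (hxx : x ≠ x')
    (hy : y ∈ M.E \ F) (hy' : y' ∈ M.E \ F) (hyy : y ≠ y')
    (h1 : M.IsBase (F ∆ ({x, y} : Set α))) (h2 : M.IsBase (F ∆ ({x', y'} : Set α))) :
    M.IsBase (F ∆ ({x, y} : Set α) ∆ ({x', y'} : Set α)) ∨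
      (M.IsBase (F ∆ ({x, y'} : Set α)) ∧ M.IsBase (F ∆ ({x', y} : Set α))) :=
  base_exchange_pattern_general M F x x' y y' hx hx' hxx hy hy' h1 h2
end

section
/- Let M be a matroid on a finite ground set E with base collection 𝓑. Let F ∈ 𝓑, let x, x' ∈ F be distinct, and let y, y' ∈ E ∖ F be distinct. If F Δ {x, y} Δ {x', y'} ∈ 𝓑, then either both F Δ {x, y} ∈ 𝓑 and F Δ {x', y'} ∈ 𝓑, or both F Δ {x, y'} ∈ 𝓑 and F Δ {x', y} ∈ 𝓑. -/
open scoped symmDiff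

/-!
Write `G = F ∆ {x, y} ∆ {x', y'}`, so `F \ G = {x, x'}` and `G \ F = {y, y'}`. Base exchange
from `F` towards `G` removing `x` (resp. `x'`) produces a base `F ∆ {x, ·}` (resp. `F ∆ {x', ·}`)
with `·` one of `y, y'`; exchange from `G` towards `F` removing `y` (resp. `y'`) produces
`F ∆ {x', y'}` or `F ∆ {x, y'}` (resp. `F ∆ {x, y}` or `F ∆ {x', y}`). These four disjunctions
force one of the two patterns.
-/

namespace Set

variable {α : Type*} {s : Set α} {a b c d : α}

lemma symmDiff_pair_eq_insert_diff_s10 (ha : a ∈ s) (hb : b ∉ s) :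
    s ∆ {a, b} = insert b (s \ {a}) := by
  ext e
  by_cases hea : e = a <;> by_cases heb : e = b <;> simp_all [mem_symmDiff]

lemma pair_symmDiff_pair_symmDiff_pair (hab : a ≠ b) (hcd : c ≠ d) (hbc : b ≠ c)
    (had : a ≠ d) : ({a, b} : Set α) ∆ {c, d} ∆ {b, c} = {a, d} := by
  ext e
  simp only [mem_symmDiff, mem_insert_iff, mem_singleton_iff]
  grind

end Set

namespace Matroid

open Set

variable {α : Type*} {M : Matroid α} {B B' : Set α} {e a b : α}

lemma IsBase.isBase_symmDiff_pair_or (hB : M.IsBase B) (hB' : M.IsBase B') (he : e ∈ B \ B')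
    (hsub : B' \ B ⊆ {a, b}) : M.IsBase (B ∆ {e, a}) ∨ M.IsBase (B ∆ {e, b}) := by
  obtain ⟨f, hf, hfB⟩ := hB.exchange hB' he
  rw [← symmDiff_pair_eq_insert_diff_s10 he.1 hf.2] at hfB
  rcases hsub hf with rfl | rfl
  · exact .inl hfB
  · exact .inr hfB

lemma IsBase.isBase_symmDiff_pair_or_of_isBase_symmDiff_symmDiff {x x' y y' : α}
    (hB : M.IsBase B) (hx : x ∈ B) (hx' : x' ∈ B) (hxx : x ≠ x') (hy : y ∉ B) (hy' : y' ∉ B)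
    (hyy : y ≠ y') (hB' : M.IsBase (B ∆ {x, y} ∆ {x', y'})) :
    (M.IsBase (B ∆ {x, y}) ∨ M.IsBase (B ∆ {x, y'})) ∧
      (M.IsBase (B ∆ {x', y'}) ∨ M.IsBase (B ∆ {x, y'})) := by
  have hxy : x ≠ y := ne_of_mem_of_not_mem hx hy
  have hxy' : x ≠ y' := ne_of_mem_of_not_mem hx hy'
  have hx'y : x' ≠ y := ne_of_mem_of_not_mem hx' hy
  have hx'y' : x' ≠ y' := ne_of_mem_of_not_mem hx' hy'
  set G := B ∆ {x, y} ∆ {x', y'} with hG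
  have hGB : G \ B ⊆ {y, y'} := by
    intro e; simp only [G, mem_sdiff, mem_symmDiff, mem_insert_iff, mem_singleton_iff]; grind
  have hBG : B \ G ⊆ {x, x'} := by
    intro e; simp only [G, mem_sdiff, mem_symmDiff, mem_insert_iff, mem_singleton_iff]; grind
  obtain ⟨hxG, hyG⟩ : x ∉ G ∧ y ∈ G := by
    simp only [G, mem_symmDiff, mem_insert_iff, mem_singleton_iff]; grind
  have hyx : G ∆ {y, x} = B ∆ {x', y'} := by
    rw [hG, pair_comm y, symmDiff_right_comm, symmDiff_symmDiff_cancel_right]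
  have hyx' : G ∆ {y, x'} = B ∆ {x, y'} := by
    rw [hG, symmDiff_assoc B, symmDiff_assoc B,
      pair_symmDiff_pair_symmDiff_pair hxy hx'y' hx'y.symm hxy']
  refine ⟨hB.isBase_symmDiff_pair_or hB' ⟨hx, hxG⟩ hGB, ?_⟩
  rw [← hyx, ← hyx']
  exact hB'.isBase_symmDiff_pair_or hB ⟨hyG, hy⟩ hBG

end Matroid

theorem base_double_exchange_pattern_general {α : Type*} (M : Matroid α)
    (F : Set α) (hF : M.IsBase F) (x x' y y' : α)
    (hx : x ∈ F) (hx' : x' ∈ F) (hxx : x ≠ x')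
    (hy : y ∈ M.E \ F) (hy' : y' ∈ M.E \ F) (hyy : y ≠ y')
    (h : M.IsBase (F ∆ ({x, y} : Set α) ∆ ({x', y'} : Set α))) :
    (M.IsBase (F ∆ ({x, y} : Set α)) ∧ M.IsBase (F ∆ ({x', y'} : Set α))) ∨
      (M.IsBase (F ∆ ({x, y'} : Set α)) ∧ M.IsBase (F ∆ ({x', y} : Set α))) := by
  obtain ⟨hxy_xy', hx'y'_xy'⟩ :=
    hF.isBase_symmDiff_pair_or_of_isBase_symmDiff_symmDiff hx hx' hxx hy.2 hy'.2 hyy h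
  obtain ⟨hx'y'_x'y, hxy_x'y⟩ :=
    hF.isBase_symmDiff_pair_or_of_isBase_symmDiff_symmDiff hx' hx hxx.symm hy'.2 hy.2 hyy.symm
      (by rwa [symmDiff_right_comm])
  tauto

/-- in a matroid on a finite ground set, if `F` is a base, `x, x' ∈ F`
are distinct, `y, y' ∈ E \ F` are distinct, and `F ∆ {x, y} ∆ {x', y'}` is a base, then
either both `F ∆ {x, y}` and `F ∆ {x', y'}` are bases, or both `F ∆ {x, y'}` and
`F ∆ {x', y}` are bases. -/
theorem base_double_exchange_pattern {α : Type*} (M : Matroid α) (hfin : M.E.Finite)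
    (F : Set α) (hF : M.IsBase F) (x x' y y' : α)
    (hx : x ∈ F) (hx' : x' ∈ F) (hxx : x ≠ x')
    (hy : y ∈ M.E \ F) (hy' : y' ∈ M.E \ F) (hyy : y ≠ y')
    (h : M.IsBase (F ∆ ({x, y} : Set α) ∆ ({x', y'} : Set α))) :
    (M.IsBase (F ∆ ({x, y} : Set α)) ∧ M.IsBase (F ∆ ({x', y'} : Set α))) ∨
      (M.IsBase (F ∆ ({x, y'} : Set α)) ∧ M.IsBase (F ∆ ({x', y} : Set α))) :=
  base_double_exchange_pattern_general M F hF x x' y y' hx hx' hxx hy hy' hyy h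
end

section
/- Let D = (E, 𝓕) be a delta-matroid and e ∈ E. Suppose there exists A₀ such that the deletion D ∖ e or the contraction D / e is isomorphic to a twist S₄ ⋆ A₀ of S₄, or to a twist S₅ ⋆ A₀ of S₅ (isomorphism meaning a bijection of ground sets mapping the feasible sets of one set system onto those of the other). Then there exists A ⊆ E such that the twist D ⋆ A contains an S-pattern. -/
open Finset
open scoped symmDiff

/-- Isomorphism of set systems: a bijection of ground sets mapping the feasible sets of
one set system onto those of the other. -/
def SysIso {α : Type*} {β : Type*} [DecidableEq α] [DecidableEq β]
    (E₁ : Finset α) (𝓕₁ : Set (Finset α)) (E₂ : Finset β) (𝓕₂ : Set (Finset β)) : Prop :=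
  ∃ f : α → β, Set.BijOn f ↑E₁ ↑E₂ ∧
    ∀ F : Finset α, F ⊆ E₁ → (F ∈ 𝓕₁ ↔ F.image f ∈ 𝓕₂)

/-- The feasible sets of the delta-matroid `S₄`. -/
def S4F : Set (Finset ℕ) := {∅, {1, 2}, {1, 3}, {1, 4}, {2, 3}, {2, 4}, {3, 4}}

/-- The feasible sets of the delta-matroid `S₅`. -/
def S5F : Set (Finset ℕ) := {∅, {1, 2}, {1, 4}, {2, 3}, {3, 4}, {1, 2, 3, 4}}

/-! Pulling back along the given isomorphism embeds a twist of `S₄` or `S₅` into the minor, and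
the minor lies inside a twist of `D`: `D ∖ e ⊆ D` and `D / e ⊆ D ⋆ {e}`. Injective images
commute with twisting, so a further twist of `D` contains an injective image of `S₄` itself, resp.
of `S₅ ⋆ {1, 3}`, and both of these visibly contain an S-pattern, at `{1, 2}`, resp. `{3, 4}`. -/

theorem deleteSys_subset {α : Type*} (𝓕 : Set (Finset α)) (e : α) : deleteSys 𝓕 e ⊆ 𝓕 :=
  fun _ hF => hF.1

section SetSystem

variable {α β : Type*} [DecidableEq α]

theorem Finset.image_symmDiff_of_injOn [DecidableEq β] {f : β → α} {s t u : Finset β}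
    (hf : Set.InjOn f s) (ht : t ⊆ s) (hu : u ⊆ s) : (t ∆ u).image f = t.image f ∆ u.image f := by
  ext a
  simp only [mem_image, mem_symmDiff]
  constructor
  · rintro ⟨x, hx | hx, rfl⟩
    · exact Or.inl ⟨⟨x, hx.1, rfl⟩, fun ⟨y, hy, hyx⟩ => hx.2 (hf (hu hy) (ht hx.1) hyx ▸ hy)⟩
    · exact Or.inr ⟨⟨x, hx.1, rfl⟩, fun ⟨y, hy, hyx⟩ => hx.2 (hf (ht hy) (hu hx.1) hyx ▸ hy)⟩
  · rintro (⟨⟨x, hx, rfl⟩, hxu⟩ | ⟨⟨x, hx, rfl⟩, hxt⟩)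
    · exact ⟨x, Or.inl ⟨hx, fun h => hxu ⟨x, h, rfl⟩⟩, rfl⟩
    · exact ⟨x, Or.inr ⟨hx, fun h => hxt ⟨x, h, rfl⟩⟩, rfl⟩

theorem mem_twist_iff {𝓕 : Set (Finset α)} {A P : Finset α} : P ∈ twist 𝓕 A ↔ A ∆ P ∈ 𝓕 := by
  constructor
  · rintro ⟨F, hF, rfl⟩
    rwa [symmDiff_symmDiff_cancel_left]
  · exact fun h => ⟨A ∆ P, h, symmDiff_symmDiff_cancel_left A P⟩

theorem twist_empty (𝓕 : Set (Finset α)) : twist 𝓕 ∅ = 𝓕 := by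
  ext P
  rw [mem_twist_iff, ← bot_eq_empty, bot_symmDiff]

theorem twist_twist (𝓕 : Set (Finset α)) (A B : Finset α) :
    twist (twist 𝓕 A) B = twist 𝓕 (A ∆ B) := by
  ext P
  simp only [mem_twist_iff, symmDiff_assoc]

theorem subset_of_mem_twist_s13 {E A : Finset α} {𝓕 : Set (Finset α)} (h𝓕 : ∀ F ∈ 𝓕, F ⊆ E)
    (hA : A ⊆ E) {P : Finset α} (hP : P ∈ twist 𝓕 A) : P ⊆ E := by
  obtain ⟨F, hF, rfl⟩ := hP
  exact symmDiff_subset_union.trans (union_subset hA (h𝓕 F hF))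

theorem contractSys_subset_twist (E : Finset α) (𝓕 : Set (Finset α)) (e : α) :
    contractSys E 𝓕 e ⊆ twist 𝓕 {e} := by
  rintro F ⟨hFE, hF⟩
  have heF : e ∉ F := fun h => (mem_erase.1 (hFE h)).1 rfl
  rw [mem_twist_iff, symmDiff_comm, (disjoint_singleton_right.2 heF).symmDiff_eq_sup]
  exact hF

structure IsSysEmbedding (g : β → α) (E' : Finset β) (𝓖 : Set (Finset β)) (E : Finset α)
    (𝓗 : Set (Finset α)) : Prop where
  injOn : Set.InjOn g E'
  mapsTo : Set.MapsTo g E' E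
  subset_of_mem : ∀ G ∈ 𝓖, G ⊆ E'
  image_mem : ∀ G ∈ 𝓖, G.image g ∈ 𝓗

namespace IsSysEmbedding

variable {g : β → α} {E' : Finset β} {𝓖 : Set (Finset β)} {E : Finset α} {𝓗 : Set (Finset α)}

theorem image_subset (h : IsSysEmbedding g E' 𝓖 E 𝓗) {C : Finset β} (hC : C ⊆ E') :
    C.image g ⊆ E :=
  image_subset_iff.2 fun _ hx => h.mapsTo (hC hx)

theorem mono (h : IsSysEmbedding g E' 𝓖 E 𝓗) {E₁ : Finset α} {𝓗₁ : Set (Finset α)}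
    (hE : E ⊆ E₁) (h𝓗 : 𝓗 ⊆ 𝓗₁) : IsSysEmbedding g E' 𝓖 E₁ 𝓗₁ :=
  ⟨h.injOn, fun _ hx => hE (h.mapsTo hx), h.subset_of_mem, fun G hG => h𝓗 (h.image_mem G hG)⟩

theorem twist [DecidableEq β] (h : IsSysEmbedding g E' 𝓖 E 𝓗) {C : Finset β} (hC : C ⊆ E') :
    IsSysEmbedding g E' (twist 𝓖 C) E (twist 𝓗 (C.image g)) := by
  refine ⟨h.injOn, h.mapsTo, fun _ => subset_of_mem_twist_s13 h.subset_of_mem hC, ?_⟩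
  rintro _ ⟨G, hG, rfl⟩
  rw [image_symmDiff_of_injOn h.injOn hC (h.subset_of_mem G hG)]
  exact ⟨_, h.image_mem G hG, rfl⟩

theorem image_symmDiff_pair [DecidableEq β] (h : IsSysEmbedding g E' 𝓖 E 𝓗) {P : Finset β}
    {u v : β} (hP : P ⊆ E') (hu : u ∈ E') (hv : v ∈ E') :
    (P ∆ {u, v}).image g = P.image g ∆ {g u, g v} := by
  rw [image_symmDiff_of_injOn h.injOn hP (insert_subset hu (singleton_subset_iff.2 hv)),
    image_insert, image_singleton]

theorem sPatternAt [DecidableEq β] (h : IsSysEmbedding g E' 𝓖 E 𝓗) {F : Finset β}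
    {x₁ x₂ y₁ y₂ : β} (hpat : SPatternAt E' 𝓖 F x₁ x₂ y₁ y₂) :
    SPatternAt E 𝓗 (F.image g) (g x₁) (g x₂) (g y₁) (g y₂) := by
  obtain ⟨hF, hx₁, hx₂, hx, hy₁, hy₂, hy, h₁₁, h₂₂, h₁₂, h₂₁, h₁₁₂₂⟩ := hpat
  have hFE := h.subset_of_mem F hF
  rw [mem_sdiff] at hy₁ hy₂
  have hgy : ∀ {y}, y ∈ E' ∧ y ∉ F → g y ∈ E \ F.image g := by
    rintro y ⟨hyE, hyF⟩
    refine mem_sdiff.2 ⟨h.mapsTo hyE, fun hgy => hyF ?_⟩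
    obtain ⟨x, hx, hxy⟩ := mem_image.1 hgy
    rwa [← h.injOn (hFE hx) hyE hxy]
  have hpair : ∀ {P x y}, P ∈ 𝓖 → x ∈ F → y ∈ E' ∧ y ∉ F → P ∆ {x, y} ∈ 𝓖 →
      P.image g ∆ {g x, g y} ∈ 𝓗 := fun hP hx hy hPxy =>
    h.image_symmDiff_pair (h.subset_of_mem _ hP) (hFE hx) hy.1 ▸ h.image_mem _ hPxy
  refine ⟨h.image_mem F hF, mem_image_of_mem g hx₁, mem_image_of_mem g hx₂,
    (h.injOn.ne_iff (hFE hx₁) (hFE hx₂)).2 hx, hgy hy₁, hgy hy₂,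
    (h.injOn.ne_iff hy₁.1 hy₂.1).2 hy, hpair hF hx₁ hy₁ h₁₁, hpair hF hx₂ hy₂ h₂₂,
    hpair hF hx₁ hy₂ h₁₂, hpair hF hx₂ hy₁ h₂₁, ?_⟩
  rw [← h.image_symmDiff_pair hFE (hFE hx₁) hy₁.1]
  exact hpair h₁₁ hx₂ hy₂ h₁₁₂₂

end IsSysEmbedding

theorem SysIso.exists_isSysEmbedding [DecidableEq β] [Nonempty α] {E₁ : Finset α}
    {𝓕₁ : Set (Finset α)} {E₂ : Finset β} {𝓕₂ : Set (Finset β)} (h : SysIso E₁ 𝓕₁ E₂ 𝓕₂)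
    (h𝓕₂ : ∀ G ∈ 𝓕₂, G ⊆ E₂) : ∃ g : β → α, IsSysEmbedding g E₂ 𝓕₂ E₁ 𝓕₁ := by
  obtain ⟨f, hf, hiso⟩ := h
  have hinv := hf.invOn_invFunOn
  have hg := hf.symm hinv.symm
  refine ⟨Function.invFunOn f E₁, hg.injOn, hg.mapsTo, h𝓕₂, fun G hG => ?_⟩
  have hGE : G.image (Function.invFunOn f E₁) ⊆ E₁ :=
    image_subset_iff.2 fun _ hx => hg.mapsTo (h𝓕₂ G hG hx)
  have hfg : G.image (f ∘ Function.invFunOn f E₁) = G.image id :=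
    image_congr fun _ hy => hinv.2 (h𝓕₂ G hG hy)
  rwa [hiso _ hGE, image_image, hfg, image_id]

theorem exists_twist_sPatternAt_of_sysIso_twist [DecidableEq β] [Nonempty α] {E E₁ T : Finset α}
    {𝓕 𝓜 : Set (Finset α)} {E' A₀ B F : Finset β} {𝓢 : Set (Finset β)} {x₁ x₂ y₁ y₂ : β}
    (hT : T ⊆ E) (hE₁ : E₁ ⊆ E) (h𝓜 : 𝓜 ⊆ twist 𝓕 T)
    (h𝓢 : ∀ G ∈ 𝓢, G ⊆ E') (hA₀ : A₀ ⊆ E') (hB : B ⊆ E')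
    (hiso : SysIso E₁ 𝓜 E' (twist 𝓢 A₀)) (hpat : SPatternAt E' (twist 𝓢 B) F x₁ x₂ y₁ y₂) :
    ∃ A ⊆ E, ∃ F x₁ x₂ y₁ y₂, SPatternAt E (twist 𝓕 A) F x₁ x₂ y₁ y₂ := by
  obtain ⟨g, hg⟩ := hiso.exists_isSysEmbedding fun _ => subset_of_mem_twist_s13 h𝓢 hA₀
  have hC : A₀ ∆ B ⊆ E' := symmDiff_subset_union.trans (union_subset hA₀ hB)
  have hgC := (hg.mono hE₁ h𝓜).twist hC
  rw [twist_twist, twist_twist, symmDiff_symmDiff_cancel_left] at hgC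
  have hA : T ∆ (A₀ ∆ B).image g ⊆ E :=
    symmDiff_subset_union.trans (union_subset hT (hgC.image_subset hC))
  exact ⟨_, hA, _, _, _, _, _, hgC.sPatternAt hpat⟩

end SetSystem

theorem subset_of_mem_S4F : ∀ G ∈ S4F, G ⊆ {1, 2, 3, 4} := by
  simp only [S4F, Set.mem_insert_iff, Set.mem_singleton_iff]
  rintro G (rfl | rfl | rfl | rfl | rfl | rfl | rfl) <;> decide

theorem subset_of_mem_S5F : ∀ G ∈ S5F, G ⊆ {1, 2, 3, 4} := by
  simp only [S5F, Set.mem_insert_iff, Set.mem_singleton_iff]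
  rintro G (rfl | rfl | rfl | rfl | rfl | rfl) <;> decide

theorem sPatternAt_twist_empty_S4F : SPatternAt {1, 2, 3, 4} (twist S4F ∅) {1, 2} 1 2 3 4 := by
  simp +decide [twist_empty, SPatternAt, S4F]

theorem sPatternAt_twist_S5F : SPatternAt {1, 2, 3, 4} (twist S5F {1, 3}) {3, 4} 3 4 1 2 := by
  simp +decide [SPatternAt, mem_twist_iff, S5F]

theorem sPattern_of_minor_iso_twist_general {α : Type*} [DecidableEq α] (E : Finset α)
    (𝓕 : Set (Finset α)) (e : α) (he : e ∈ E)
    (h : ∃ A₀ : Finset ℕ, A₀ ⊆ ({1, 2, 3, 4} : Finset ℕ) ∧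
      (SysIso (E.erase e) (deleteSys 𝓕 e) ({1, 2, 3, 4} : Finset ℕ) (twist S4F A₀) ∨
       SysIso (E.erase e) (deleteSys 𝓕 e) ({1, 2, 3, 4} : Finset ℕ) (twist S5F A₀) ∨
       SysIso (E.erase e) (contractSys E 𝓕 e) ({1, 2, 3, 4} : Finset ℕ) (twist S4F A₀) ∨
       SysIso (E.erase e) (contractSys E 𝓕 e) ({1, 2, 3, 4} : Finset ℕ) (twist S5F A₀))) :
    ∃ A ⊆ E, ∃ F x₁ x₂ y₁ y₂, SPatternAt E (twist 𝓕 A) F x₁ x₂ y₁ y₂ := by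
  obtain ⟨A₀, hA₀, hiso⟩ := h
  have : Nonempty α := ⟨e⟩
  have hdel : deleteSys 𝓕 e ⊆ twist 𝓕 ∅ := by rw [twist_empty]; exact deleteSys_subset 𝓕 e
  have hcon := contractSys_subset_twist E 𝓕 e
  have he' : {e} ⊆ E := singleton_subset_iff.2 he
  rcases hiso with hiso | hiso | hiso | hiso
  · exact exists_twist_sPatternAt_of_sysIso_twist (empty_subset E) (erase_subset e E) hdel
      subset_of_mem_S4F hA₀ (empty_subset _) hiso sPatternAt_twist_empty_S4F
  · exact exists_twist_sPatternAt_of_sysIso_twist (empty_subset E) (erase_subset e E) hdel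
      subset_of_mem_S5F hA₀ (by decide) hiso sPatternAt_twist_S5F
  · exact exists_twist_sPatternAt_of_sysIso_twist he' (erase_subset e E) hcon
      subset_of_mem_S4F hA₀ (empty_subset _) hiso sPatternAt_twist_empty_S4F
  · exact exists_twist_sPatternAt_of_sysIso_twist he' (erase_subset e E) hcon
      subset_of_mem_S5F hA₀ (by decide) hiso sPatternAt_twist_S5F

/-- if some elementary minor `D ∖ e` or `D / e` of a delta-matroid `D` is
isomorphic to a twist of `S₄` or of `S₅`, then some twist `D ⋆ A` contains an S-pattern. -/
theorem sPattern_of_minor_iso_twist {α : Type*} [DecidableEq α] (E : Finset α)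
    (𝓕 : Set (Finset α)) (hD : IsDeltaMatroid E 𝓕) (e : α) (he : e ∈ E)
    (h : ∃ A₀ : Finset ℕ, A₀ ⊆ ({1, 2, 3, 4} : Finset ℕ) ∧
      (SysIso (E.erase e) (deleteSys 𝓕 e) ({1, 2, 3, 4} : Finset ℕ) (twist S4F A₀) ∨
       SysIso (E.erase e) (deleteSys 𝓕 e) ({1, 2, 3, 4} : Finset ℕ) (twist S5F A₀) ∨
       SysIso (E.erase e) (contractSys E 𝓕 e) ({1, 2, 3, 4} : Finset ℕ) (twist S4F A₀) ∨
       SysIso (E.erase e) (contractSys E 𝓕 e) ({1, 2, 3, 4} : Finset ℕ) (twist S5F A₀))) :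
    ∃ A ⊆ E, ∃ F x₁ x₂ y₁ y₂, SPatternAt E (twist 𝓕 A) F x₁ x₂ y₁ y₂ :=
  sPattern_of_minor_iso_twist_general E 𝓕 e he h
end
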